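/- arXiv:1805.11430 — 3 statements merged into one kernel-verified Lean document; each statement's English description precedes it below -/
import Mathlib

section
/- For each y ∈ [0,1] and 1 ≤ i ≤ N−1: KA_i(y) = Σ_{n=1}^{i} S_n^{-1} KI_n(y) and KB_i(y) = Σ_{n=i+1}^{N} S_n^{-1} KI_n(y), where S_n = Σ_{j∈Ω} p_j/k_{n,j}. -/
/-!
Cutting a nonempty word `ω = ω' j` at its last letter gives
`δ_ω(y) = δ_{ω'}(y) · p_j / k_{n,j}` with `I_n ∋ T_{ω'} y`; summing over the last letter `j` factors
out `S_n`, so `KI_n = S_n · K_n`, where `K_n` (`KAt n`) sums `δ_ω(y)` over all words with `T_ω y ∈ I_n`.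
Since the orbit stays in `[0,1] = I_1 ∪ ⋯ ∪ I_N`, `KA_i` and `KB_i` are the finite sums of the `K_n`
over `n ≤ i` and `n > i`. All rearrangements are justified by absolute convergence: by the
expanding-on-average condition, the words of length `t` contribute at most `ρ ^ t`.
-/

open Set

noncomputable section

/-- `T_ω = T_{ω_t} ∘ ⋯ ∘ T_{ω_1}` (head of the list applied first). -/
def rwordApply (T : ℕ → ℝ → ℝ) : List ℕ → ℝ → ℝ
  | [], y => y
  | j :: ω, y => rwordApply T ω (T j y)

/-- the weighted slope product `δ_ω(y,|ω|)`; `ι x` is the index of the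
partition interval containing `x`. -/
def rdelta (p : ℕ → ℝ) (k : ℕ → ℕ → ℝ) (ι : ℝ → ℕ) (T : ℕ → ℝ → ℝ) :
    List ℕ → ℝ → ℝ
  | [], _ => 1
  | j :: ω, y => p j / k (ι y) j * rdelta p k ι T ω (T j y)

/-- the random piecewise linear map with slopes `k`, intercepts `d`. -/
def Tpl (k d : ℕ → ℕ → ℝ) (ι : ℝ → ℕ) (j : ℕ) (x : ℝ) : ℝ :=
  k (ι x) j * x + d (ι x) j

/-- finite words with letters in `Ωs`. -/
def Words (Ωs : Set ℕ) : Type := {ω : List ℕ // ∀ j ∈ ω, j ∈ Ωs}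

/-- `KI_n(y) = Σ_{t≥1} Σ_{ω ∈ Ωᵗ} δ_ω(y,t)·1_{I_n}(T_{ω₁^{t-1}}(y))`. -/
def KI (Ωs : Set ℕ) (p : ℕ → ℝ) (k : ℕ → ℕ → ℝ) (ι : ℝ → ℕ) (T : ℕ → ℝ → ℝ)
    (n : ℕ) (y : ℝ) : ℝ :=
  ∑' ω : {ω : List ℕ // (∀ j ∈ ω, j ∈ Ωs) ∧ ω ≠ []},
    if ι (rwordApply T ω.1.dropLast y) = n then rdelta p k ι T ω.1 y else 0

/-- `KA_i(y) = Σ_{t≥0} Σ_{ω ∈ Ωᵗ} δ_ω(y,t)·1_{I_1 ∪ ⋯ ∪ I_i}(T_ω(y))`. -/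
def KA (Ωs : Set ℕ) (p : ℕ → ℝ) (k : ℕ → ℕ → ℝ) (ι : ℝ → ℕ) (T : ℕ → ℝ → ℝ)
    (i : ℕ) (y : ℝ) : ℝ :=
  ∑' ω : Words Ωs,
    if ι (rwordApply T ω.1 y) ≤ i then rdelta p k ι T ω.1 y else 0

/-- `KB_i(y) = Σ_{t≥0} Σ_{ω ∈ Ωᵗ} δ_ω(y,t)·1_{I_{i+1} ∪ ⋯ ∪ I_N}(T_ω(y))`. -/
def KB (Ωs : Set ℕ) (p : ℕ → ℝ) (k : ℕ → ℕ → ℝ) (ι : ℝ → ℕ) (T : ℕ → ℝ → ℝ)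
    (i : ℕ) (y : ℝ) : ℝ :=
  ∑' ω : Words Ωs,
    if i < ι (rwordApply T ω.1 y) then rdelta p k ι T ω.1 y else 0

/-- `S_n = Σ_{j∈Ω} p_j / k_{n,j}`, the average inverse slope on `I_n`. -/
def Sav (Ωs : Set ℕ) (p : ℕ → ℝ) (k : ℕ → ℕ → ℝ) (n : ℕ) : ℝ :=
  ∑' j : Ωs, p j.1 / k n j.1

theorem tsum_ite_mem_eq_sum_tsum {α β M : Type*} [AddCommMonoid M] [TopologicalSpace M]
    [ContinuousAdd M] [T2Space M] [DecidableEq β] (f : α → M) (g : α → β) (s : Finset β)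
    (hf : ∀ b ∈ s, Summable fun a => if g a = b then f a else 0) :
    ∑' a, (if g a ∈ s then f a else 0) = ∑ b ∈ s, ∑' a, if g a = b then f a else 0 := by
  rw [← Summable.tsum_finsetSum hf]
  exact tsum_congr fun a => (Finset.sum_ite_eq s (g a) fun _ => f a).symm

theorem summable_prod_mul_and_tsum_le {α β : Type*} {a : α → ℝ} {g : α → β → ℝ}
    (ha : ∀ i, 0 ≤ a i) (hg : ∀ i b, 0 ≤ g i b) (has : Summable a)
    (hgs : ∀ i, Summable (g i)) {B : ℝ} (hB : ∀ i, ∑' b, g i b ≤ B) :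
    Summable (fun z : α × β => a z.1 * g z.1 z.2) ∧
      ∑' z : α × β, a z.1 * g z.1 z.2 ≤ (∑' i, a i) * B := by
  have hfib : ∀ i, ∑' b, a i * g i b ≤ a i * B := fun i => by
    rw [tsum_mul_left]
    exact mul_le_mul_of_nonneg_left (hB i) (ha i)
  have hcol : Summable fun i => ∑' b, a i * g i b :=
    (has.mul_right B).of_nonneg_of_le
      (fun i => tsum_nonneg fun b => mul_nonneg (ha i) (hg i b)) hfib
  have hsum : Summable (fun z : α × β => a z.1 * g z.1 z.2) :=
    (summable_prod_of_nonneg fun z => mul_nonneg (ha z.1) (hg z.1 z.2)).2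
      ⟨fun i => (hgs i).mul_left (a i), hcol⟩
  refine ⟨hsum, ?_⟩
  calc ∑' z : α × β, a z.1 * g z.1 z.2
      = ∑' i, ∑' b, a i * g i b := hsum.tsum_prod' fun i => (hgs i).mul_left (a i)
    _ ≤ ∑' i, a i * B := hcol.tsum_le_tsum hfib (has.mul_right B)
    _ = (∑' i, a i) * B := tsum_mul_right

section Words

variable (Ωs : Set ℕ)

def WordsOfLength (t : ℕ) : Type :=
  {ω : List ℕ // (∀ j ∈ ω, j ∈ Ωs) ∧ ω.length = t}

instance : Unique (WordsOfLength Ωs 0) where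
  default := ⟨[], by simp⟩
  uniq ω := Subtype.ext (List.length_eq_zero_iff.1 ω.2.2)

def Words.sigmaLengthEquiv : (Σ t, WordsOfLength Ωs t) ≃ Words Ωs where
  toFun x := ⟨x.2.1, x.2.2.1⟩
  invFun ω := ⟨ω.1.length, ω.1, ω.2, rfl⟩
  left_inv := by rintro ⟨t, l, hl, rfl⟩; rfl
  right_inv _ := rfl

def WordsOfLength.consEquiv (t : ℕ) : Ωs × WordsOfLength Ωs t ≃ WordsOfLength Ωs (t + 1) where
  toFun z := ⟨z.1.1 :: z.2.1, by simpa [z.1.2, z.2.2.2] using z.2.2.1⟩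
  invFun ω :=
    have hω : ω.1 ≠ [] := List.ne_nil_of_length_eq_add_one ω.2.2
    (⟨ω.1.head hω, ω.2.1 _ (List.head_mem hω)⟩,
      ⟨ω.1.tail, fun j hj => ω.2.1 j (List.mem_of_mem_tail hj), by simp [ω.2.2]⟩)
  left_inv _ := rfl
  right_inv ω := Subtype.ext (List.cons_head_tail _)

def Words.snocEquiv : Words Ωs × Ωs ≃ {ω : List ℕ // (∀ j ∈ ω, j ∈ Ωs) ∧ ω ≠ []} where
  toFun z := ⟨z.1.1 ++ [z.2.1], by simpa [or_imp, forall_and, z.2.2] using z.1.2⟩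
  invFun ω :=
    (⟨ω.1.dropLast, fun j hj => ω.2.1 j (List.dropLast_subset _ hj)⟩,
      ⟨ω.1.getLast ω.2.2, ω.2.1 _ (List.getLast_mem ω.2.2)⟩)
  left_inv := by
    rintro ⟨⟨l, hl⟩, j, hj⟩
    simp
  right_inv ω := Subtype.ext (List.dropLast_append_getLast ω.2.2)

end Words

section WeightedSlopes

variable {p : ℕ → ℝ} {k : ℕ → ℕ → ℝ} {ι : ℝ → ℕ} {T : ℕ → ℝ → ℝ}

theorem rwordApply_mapsTo {Ωs : Set ℕ} {s : Set ℝ} (hT : ∀ j ∈ Ωs, MapsTo (T j) s s) :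
    ∀ ω : List ℕ, (∀ j ∈ ω, j ∈ Ωs) → MapsTo (rwordApply T ω) s s
  | [], _ => mapsTo_id s
  | j :: ω, hω =>
      (rwordApply_mapsTo hT ω fun i hi => hω i (List.mem_cons_of_mem _ hi)).comp
        (hT j (hω j List.mem_cons_self))

theorem rdelta_append_singleton (ω : List ℕ) (j : ℕ) (y : ℝ) :
    rdelta p k ι T (ω ++ [j]) y = rdelta p k ι T ω y * (p j / k (ι (rwordApply T ω y)) j) := by
  induction ω generalizing y with
  | nil => simp [rdelta, rwordApply]
  | cons a ω ih =>
      simp only [List.cons_append, rdelta, rwordApply, ih]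
      ring

theorem abs_rdelta_cons {j : ℕ} (hj : 0 ≤ p j) (ω : List ℕ) (y : ℝ) :
    |rdelta p k ι T (j :: ω) y| = p j / |k (ι y) j| * |rdelta p k ι T ω (T j y)| := by
  rw [rdelta, abs_mul, abs_div, abs_of_nonneg hj]

end WeightedSlopes

def ExpandingOnAverage (Ωs : Set ℕ) (p : ℕ → ℝ) (k : ℕ → ℕ → ℝ) (ι : ℝ → ℕ) (s : Set ℝ)
    (ρ : ℝ) : Prop :=
  ∀ x ∈ s, Summable (fun j : Ωs => p j / |k (ι x) j|) ∧ ∑' j : Ωs, p j / |k (ι x) j| ≤ ρ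

section ExpandingOnAverage

variable {Ωs : Set ℕ} {p : ℕ → ℝ} {k : ℕ → ℕ → ℝ} {ι : ℝ → ℕ} {T : ℕ → ℝ → ℝ}
  {s : Set ℝ} {ρ : ℝ}

theorem abs_rdelta_wordsOfLength_summable_and_tsum_le (hp : ∀ j ∈ Ωs, 0 ≤ p j)
    (hT : ∀ j ∈ Ωs, MapsTo (T j) s s)
    (hexp : ExpandingOnAverage Ωs p k ι s ρ)
    (t : ℕ) : ∀ y ∈ s,
      Summable (fun ω : WordsOfLength Ωs t => |rdelta p k ι T ω.1 y|) ∧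
        ∑' ω : WordsOfLength Ωs t, |rdelta p k ι T ω.1 y| ≤ ρ ^ t := by
  induction t with
  | zero =>
      intro y _
      refine ⟨Summable.of_finite, ?_⟩
      rw [tsum_fintype, Fintype.sum_unique, pow_zero]
      exact abs_one.le
  | succ t ih =>
      intro y hy
      obtain ⟨ha, haρ⟩ := hexp y hy
      have ha0 : ∀ j : Ωs, 0 ≤ p j / |k (ι y) j| := fun j => div_nonneg (hp j j.2) (abs_nonneg _)
      have hρ : 0 ≤ ρ := (tsum_nonneg ha0).trans haρ
      obtain ⟨hsum, hle⟩ := summable_prod_mul_and_tsum_le ha0 (fun _ _ => abs_nonneg _) ha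
        (fun j => (ih _ (hT j j.2 hy)).1) (fun j => (ih _ (hT j j.2 hy)).2)
      have hcons : ∀ z, |rdelta p k ι T (WordsOfLength.consEquiv Ωs t z).1 y| =
          p z.1 / |k (ι y) z.1| * |rdelta p k ι T z.2.1 (T z.1 y)| :=
        fun z => abs_rdelta_cons (hp _ z.1.2) _ _
      refine ⟨(WordsOfLength.consEquiv Ωs t).summable_iff.1 ?_, ?_⟩
      · simpa only [Function.comp_def, hcons] using hsum
      · rw [← (WordsOfLength.consEquiv Ωs t).tsum_eq]
        simp_rw [hcons]
        calc _ ≤ _ := hle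
          _ ≤ ρ * ρ ^ t := mul_le_mul_of_nonneg_right haρ (pow_nonneg hρ t)
          _ = ρ ^ (t + 1) := (pow_succ' ρ t).symm

theorem summable_rdelta_words (hp : ∀ j ∈ Ωs, 0 ≤ p j) (hT : ∀ j ∈ Ωs, MapsTo (T j) s s)
    (hexp : ExpandingOnAverage Ωs p k ι s ρ)
    (hρ1 : ρ < 1) {y : ℝ} (hy : y ∈ s) :
    Summable (fun ω : Words Ωs => rdelta p k ι T ω.1 y) := by
  have hbound t := abs_rdelta_wordsOfLength_summable_and_tsum_le hp hT hexp t y hy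
  have hρ : 0 ≤ ρ := by simpa using (tsum_nonneg fun _ => abs_nonneg _).trans (hbound 1).2
  refine Summable.of_abs ((Words.sigmaLengthEquiv Ωs).summable_iff.1 ?_)
  refine (summable_sigma_of_nonneg fun _ => abs_nonneg _).2 ⟨fun t => (hbound t).1, ?_⟩
  exact (summable_geometric_of_lt_one hρ hρ1).of_nonneg_of_le
    (fun _ => tsum_nonneg fun _ => abs_nonneg _) fun t => (hbound t).2

end ExpandingOnAverage

def KAt (Ωs : Set ℕ) (p : ℕ → ℝ) (k : ℕ → ℕ → ℝ) (ι : ℝ → ℕ) (T : ℕ → ℝ → ℝ)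
    (n : ℕ) (y : ℝ) : ℝ :=
  ∑' ω : Words Ωs, if ι (rwordApply T ω.1 y) = n then rdelta p k ι T ω.1 y else 0

section Decomposition

variable {Ωs : Set ℕ} {p : ℕ → ℝ} {k : ℕ → ℕ → ℝ} {ι : ℝ → ℕ} {T : ℕ → ℝ → ℝ} {y : ℝ}

theorem summable_KAt_summand (hδ : Summable fun ω : Words Ωs => rdelta p k ι T ω.1 y) (n : ℕ) :
    Summable fun ω : Words Ωs =>
      if ι (rwordApply T ω.1 y) = n then rdelta p k ι T ω.1 y else 0 :=
  hδ.summable_of_eq_zero_or_self fun ω => by split_ifs <;> simp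

theorem KI_eq_KAt_mul_Sav {n : ℕ} (hδ : Summable fun ω : Words Ωs => rdelta p k ι T ω.1 y)
    (hS : Summable fun j : Ωs => p j / k n j) :
    KI Ωs p k ι T n y = KAt Ωs p k ι T n y * Sav Ωs p k n := by
  rw [KAt, Sav, tsum_mul_tsum_of_summable_norm (summable_KAt_summand hδ n).norm hS.norm, KI,
    ← (Words.snocEquiv Ωs).tsum_eq]
  refine tsum_congr fun z => ?_
  simp only [Words.snocEquiv, Equiv.coe_fn_mk, List.dropLast_concat, rdelta_append_singleton]
  split_ifs with h
  · rw [h]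
  · rw [zero_mul]

theorem KA_eq_sum_KAt (hδ : Summable fun ω : Words Ωs => rdelta p k ι T ω.1 y)
    (horbit : ∀ ω : Words Ωs, 1 ≤ ι (rwordApply T ω.1 y)) (i : ℕ) :
    KA Ωs p k ι T i y = ∑ n ∈ Finset.Icc 1 i, KAt Ωs p k ι T n y :=
  (tsum_congr fun ω => if_congr (by simp [horbit ω]) rfl rfl).trans
    (tsum_ite_mem_eq_sum_tsum _ _ _ fun n _ => summable_KAt_summand hδ n)

theorem KB_eq_sum_KAt {N : ℕ} (hδ : Summable fun ω : Words Ωs => rdelta p k ι T ω.1 y)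
    (horbit : ∀ ω : Words Ωs, ι (rwordApply T ω.1 y) ≤ N) (i : ℕ) :
    KB Ωs p k ι T i y = ∑ n ∈ Finset.Icc (i + 1) N, KAt Ωs p k ι T n y :=
  (tsum_congr fun ω => if_congr (by simp [horbit ω]) rfl rfl).trans
    (tsum_ite_mem_eq_sum_tsum _ _ _ fun n _ => summable_KAt_summand hδ n)

end Decomposition

theorem stmt_3_general (Ωs : Set ℕ) (N : ℕ) (p : ℕ → ℝ) (ρ : ℝ)
    (hρ1 : ρ < 1)
    (hp : ∀ j ∈ Ωs, 0 < p j)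
    (k d : ℕ → ℕ → ℝ) (ι : ℝ → ℕ)
    (hι : ∀ x ∈ Icc (0:ℝ) 1, ι x ∈ Finset.Icc 1 N)
    (hT : ∀ j ∈ Ωs, ∀ x ∈ Icc (0:ℝ) 1, Tpl k d ι j x ∈ Icc (0:ℝ) 1)
    (hA2 : ∀ n ∈ Finset.Icc 1 N,
      Summable (fun j : Ωs => p j.1 / |k n j.1|) ∧
        ∑' j : Ωs, p j.1 / |k n j.1| ≤ ρ)
    (hS : ∀ n ∈ Finset.Icc 1 N, Sav Ωs p k n ≠ 0) :
    ∀ y ∈ Icc (0:ℝ) 1, ∀ i ∈ Finset.Icc 1 (N - 1),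
      KA Ωs p k ι (Tpl k d ι) i y =
          ∑ n ∈ Finset.Icc 1 i, (Sav Ωs p k n)⁻¹ * KI Ωs p k ι (Tpl k d ι) n y ∧
      KB Ωs p k ι (Tpl k d ι) i y =
          ∑ n ∈ Finset.Icc (i + 1) N, (Sav Ωs p k n)⁻¹ * KI Ωs p k ι (Tpl k d ι) n y := by
  intro y hy i hi
  have hp0 j hj : 0 ≤ p j := (hp j hj).le
  have hmaps j (hj : j ∈ Ωs) : MapsTo (Tpl k d ι j) (Icc 0 1) (Icc 0 1) := hT j hj
  have hδ := summable_rdelta_words hp0 hmaps (fun x hx => hA2 _ (hι x hx)) hρ1 hy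
  have horbit (ω : Words Ωs) : ι (rwordApply (Tpl k d ι) ω.1 y) ∈ Finset.Icc 1 N :=
    hι _ (rwordApply_mapsTo hmaps ω.1 ω.2 hy)
  have hKI n (hn : n ∈ Finset.Icc 1 N) :
      (Sav Ωs p k n)⁻¹ * KI Ωs p k ι (Tpl k d ι) n y = KAt Ωs p k ι (Tpl k d ι) n y := by
    have hSn : Summable fun j : Ωs => p j / k n j :=
      .of_abs <| (hA2 n hn).1.congr fun j => by rw [abs_div, abs_of_nonneg (hp0 j j.2)]
    rw [KI_eq_KAt_mul_Sav hδ hSn, mul_comm, mul_inv_cancel_right₀ (hS n hn)]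
  simp only [Finset.mem_Icc] at hi horbit
  refine ⟨?_, ?_⟩
  · rw [KA_eq_sum_KAt hδ (fun ω => (horbit ω).1)]
    exact Finset.sum_congr rfl fun n hn => (hKI n (by simp at hn ⊢; omega)).symm
  · rw [KB_eq_sum_KAt hδ (fun ω => (horbit ω).2)]
    exact Finset.sum_congr rfl fun n hn => (hKI n (by simp at hn ⊢; omega)).symm

/-- for each `y ∈ [0,1]` and `1 ≤ i ≤ N-1`,
`KA_i(y) = Σ_{n=1}^{i} S_n⁻¹ KI_n(y)` and `KB_i(y) = Σ_{n=i+1}^{N} S_n⁻¹ KI_n(y)`. -/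
theorem stmt_3 (Ωs : Set ℕ) (N : ℕ) (hN : 2 ≤ N) (p : ℕ → ℝ) (ρ : ℝ)
    (hρ0 : 0 < ρ) (hρ1 : ρ < 1)
    (hp : ∀ j ∈ Ωs, 0 < p j) (hpsum : HasSum (fun j : Ωs => p j.1) 1)
    (k d : ℕ → ℕ → ℝ) (ι : ℝ → ℕ)
    (hι : ∀ x ∈ Icc (0:ℝ) 1, ι x ∈ Finset.Icc 1 N)
    (hk : ∀ n ∈ Finset.Icc 1 N, ∀ j ∈ Ωs, k n j ≠ 0)
    (hT : ∀ j ∈ Ωs, ∀ x ∈ Icc (0:ℝ) 1, Tpl k d ι j x ∈ Icc (0:ℝ) 1)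
    (hA2 : ∀ n ∈ Finset.Icc 1 N,
      Summable (fun j : Ωs => p j.1 / |k n j.1|) ∧
        ∑' j : Ωs, p j.1 / |k n j.1| ≤ ρ)
    (hS : ∀ n ∈ Finset.Icc 1 N, Sav Ωs p k n ≠ 0) :
    ∀ y ∈ Icc (0:ℝ) 1, ∀ i ∈ Finset.Icc 1 (N - 1),
      KA Ωs p k ι (Tpl k d ι) i y =
          ∑ n ∈ Finset.Icc 1 i, (Sav Ωs p k n)⁻¹ * KI Ωs p k ι (Tpl k d ι) n y ∧
      KB Ωs p k ι (Tpl k d ι) i y =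
          ∑ n ∈ Finset.Icc (i + 1) N, (Sav Ωs p k n)⁻¹ * KI Ωs p k ι (Tpl k d ι) n y :=
  stmt_3_general Ωs N p ρ hρ1 hp k d ι hι hT hA2 hS

end
end

section
/- The fundamental matrix M (an N × (N−1) real matrix) has rank at most N−2; consequently the homogeneous system Mγ = 0 admits a non-trivial solution γ ∈ ℝ^{N−1}. -/
/-- the fundamental matrix `M` (an `N × (N-1)` real matrix whose
columns are orthogonal to the vectors `K` and `D` of Lemma `rel`, with `K`, `D`
satisfying assumption (A3)) has rank at most `N-2`; consequently `Mγ = 0` admits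
a non-trivial solution `γ ∈ ℝ^{N-1}`. -/
theorem stmt_6 (N : ℕ) (hN : 2 ≤ N)
    (K D : Fin N → ℝ) (M : Matrix (Fin N) (Fin (N - 1)) ℝ)
    (hK : ∀ i, ∑ n, K n * M n i = 0)
    (hD : ∀ i, ∑ n, D n * M n i = 0)
    (hA3 : ∀ i, ∃ n, D i * K n ≠ D n * K i) :
    M.rank ≤ N - 2 ∧ ∃ γ : Fin (N - 1) → ℝ, γ ≠ 0 ∧ M.mulVec γ = 0 := by
  classical
  set A : Matrix (Fin 2) (Fin N) ℝ := Matrix.of ![K, D] with hA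
  have hAM : A * M = 0 := by
    ext k i
    fin_cases k
    · simpa [A, Matrix.mul_apply] using (hK i)
    · simpa [A, Matrix.mul_apply] using (hD i)
  -- rank of A is 2
  have i0 : Fin N := ⟨0, by omega⟩
  obtain ⟨n0, hn0⟩ := hA3 i0
  set g : Fin 2 → Fin N := ![i0, n0] with hg
  set E : Matrix (Fin N) (Fin 2) ℝ := Matrix.of (fun n k => if n = g k then (1:ℝ) else 0) with hE
  have hAE : A * E = A.submatrix id g := by
    ext j k
    simp [Matrix.mul_apply, E, mul_ite]
  have hdet : (A.submatrix id g).det ≠ 0 := by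
    rw [Matrix.det_fin_two]
    simp only [Matrix.submatrix_apply, id]
    have : A 0 (g 0) = K i0 ∧ A 1 (g 1) = D n0 ∧ A 0 (g 1) = K n0 ∧ A 1 (g 0) = D i0 := by
      refine ⟨rfl, rfl, rfl, rfl⟩
    rw [this.1, this.2.1, this.2.2.1, this.2.2.2]
    intro h
    apply hn0
    linarith [h]
  have hBrank : (A.submatrix id g).rank = 2 := by
    rw [Matrix.rank_of_isUnit _ ((Matrix.isUnit_iff_isUnit_det _).2 (isUnit_iff_ne_zero.2 hdet))]
    simp
  have hArank2 : A.rank = 2 := by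
    have h1 : (A.submatrix id g).rank ≤ A.rank := by
      rw [← hAE]; exact Matrix.rank_mul_le_left A E
    have h2 : A.rank ≤ 2 := by
      simpa using Matrix.rank_le_card_height A
    omega
  -- range of M.mulVecLin ⊆ ker of A.mulVecLin
  have hle : LinearMap.range M.mulVecLin ≤ LinearMap.ker A.mulVecLin := by
    rintro v ⟨γ, rfl⟩
    simp only [LinearMap.mem_ker, Matrix.mulVecLin_apply]
    rw [Matrix.mulVec_mulVec, hAM]
    simp
  have hker : Module.finrank ℝ (LinearMap.ker A.mulVecLin) = N - 2 := by
    have := LinearMap.finrank_range_add_finrank_ker A.mulVecLin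
    rw [Module.finrank_pi] at this
    have hr : Module.finrank ℝ (LinearMap.range A.mulVecLin) = 2 := hArank2
    simp only [Fintype.card_fin] at this
    omega
  have hrank : M.rank ≤ N - 2 := by
    rw [Matrix.rank, ← hker]
    exact Submodule.finrank_mono hle
  refine ⟨hrank, ?_⟩
  have hnull := LinearMap.finrank_range_add_finrank_ker M.mulVecLin
  rw [Module.finrank_pi] at hnull
  simp only [Fintype.card_fin] at hnull
  have hkerM : LinearMap.ker M.mulVecLin ≠ ⊥ := by
    intro h
    rw [h, finrank_bot] at hnull
    have hr : Module.finrank ℝ (LinearMap.range M.mulVecLin) = M.rank := rfl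
    omega
  obtain ⟨⟨γ, hγmem⟩, hγne⟩ := Submodule.nonzero_mem_of_bot_lt (bot_lt_iff_ne_bot.2 hkerM)
  refine ⟨γ, ?_, hγmem⟩
  intro h
  apply hγne
  simp [h]
end

section
/- For every y ∈ [0,1]: y = Σ_{t≥0} Σ_{ω∈Ωᵗ} δ_ω(y,t)·C(T_ω(y)) − Σ_{i=1}^{N−1} (η_i + φ_i)·KB_i(y), where for y ∈ I_n, C(y) = Σ_{j∈Ω} (Σ_{i=1}^{n−1} p_j/|k_{i,j}| + (p_j/|k_{n,j}|)·1_{(−∞,0)}(k_{n,j})), η_i = Σ_j p_j(1_{(0,∞)}(k_{i,j}) − a_{i,j})/k_{i,j} and φ_i = Σ_j p_j(−1_{(−∞,0)}(k_{i+1,j}) + b_{i,j})/k_{i+1,j}. -/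
/-!
Let `L h (x) = Σ_j p_j / k_{ι x, j} · h (T_j x)`. Splitting a word off its first letter shows that
`G = Σ_ω δ_ω · C ∘ T_ω` and `KB_i` satisfy `G = C + L G` and `KB_i = 1_{i < ι} + L KB_i`, while
`Σ_j p_j = 1` gives `L id = id + D` with `D x = Σ_j p_j d_{ι x, j} / k_{ι x, j}`. Along every branch
the `η`- and `φ`-terms telescope, and (A4) on `I_1` kills the boundary term, so
`C - Σ_i (η_i + φ_i) 1_{i < ι} + D = 0`. Hence the defect `G - Σ_i (η_i + φ_i) KB_i - id` is a
bounded fixed point of `L`. As `Σ_j |p_j / k_{n,j}| ≤ ρ < 1`, `L` contracts the sup norm, and the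
defect vanishes.
-/

open Set

noncomputable section

/-- `a_{i,j} = k_{i,j} z_i + d_{i,j}`, the left limit of `T_j` at `z_i`. -/
def aPt (k d : ℕ → ℕ → ℝ) (z : ℕ → ℝ) (i j : ℕ) : ℝ := k i j * z i + d i j

/-- `b_{i,j} = k_{i+1,j} z_i + d_{i+1,j}`, the right limit of `T_j` at `z_i`. -/
def bPt (k d : ℕ → ℕ → ℝ) (z : ℕ → ℝ) (i j : ℕ) : ℝ := k (i + 1) j * z i + d (i + 1) j

/-- the entries `μ_{n,i}` of the fundamental matrix (Definition 3.2). -/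
def fundM (Ωs : Set ℕ) (p : ℕ → ℝ) (k d : ℕ → ℕ → ℝ) (ι : ℝ → ℕ) (z : ℕ → ℝ)
    (n i : ℕ) : ℝ :=
  ∑' j : Ωs,
    ((if n = i then p j.1 / k i j.1 else 0) -
      (if n = i + 1 then p j.1 / k (i + 1) j.1 else 0) +
      (p j.1 / k i j.1 * KI Ωs p k ι (Tpl k d ι) n (aPt k d z i j.1) -
        p j.1 / k (i + 1) j.1 * KI Ωs p k ι (Tpl k d ι) n (bPt k d z i j.1)))

/-- `η_i = Σ_j p_j (1_{(0,∞)}(k_{i,j}) − a_{i,j}) / k_{i,j}`. -/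
def etaC (Ωs : Set ℕ) (p : ℕ → ℝ) (k d : ℕ → ℕ → ℝ) (z : ℕ → ℝ) (i : ℕ) : ℝ :=
  ∑' j : Ωs, p j.1 * ((if 0 < k i j.1 then (1:ℝ) else 0) - aPt k d z i j.1) / k i j.1

/-- `φ_i = Σ_j p_j (−1_{(−∞,0)}(k_{i+1,j}) + b_{i,j}) / k_{i+1,j}`. -/
def phiC (Ωs : Set ℕ) (p : ℕ → ℝ) (k d : ℕ → ℕ → ℝ) (z : ℕ → ℝ) (i : ℕ) : ℝ :=
  ∑' j : Ωs,
    p j.1 * (-(if k (i + 1) j.1 < 0 then (1:ℝ) else 0) + bPt k d z i j.1) / k (i + 1) j.1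

/-- for `y ∈ I_n`, `C(y) = Σ_j (Σ_{i=1}^{n-1} p_j/|k_{i,j}| +
(p_j/|k_{n,j}|)·1_{(−∞,0)}(k_{n,j}))`. -/
def CC (Ωs : Set ℕ) (p : ℕ → ℝ) (k : ℕ → ℕ → ℝ) (ι : ℝ → ℕ) (y : ℝ) : ℝ :=
  ∑' j : Ωs,
    ((∑ i ∈ Finset.Ico 1 (ι y), p j.1 / |k i j.1|) +
      (if k (ι y) j.1 < 0 then p j.1 / |k (ι y) j.1| else 0))

namespace Words

variable {Ωs : Set ℕ}

def nil : Words Ωs := ⟨[], List.forall_mem_nil _⟩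

def cons (j : Ωs) (ω : Words Ωs) : Words Ωs := ⟨j.1 :: ω.1, List.forall_mem_cons.2 ⟨j.2, ω.2⟩⟩

theorem cons_injective : Function.Injective fun q : Ωs × Words Ωs => cons q.1 q.2 := by
  rintro ⟨⟨i, _⟩, ⟨_, _⟩⟩ ⟨⟨j, _⟩, ⟨_, _⟩⟩ h
  obtain ⟨rfl, rfl⟩ := List.cons_eq_cons.1 (congrArg Subtype.val h)
  rfl

theorem mem_range_cons {ω : Words Ωs} (hω : ω ≠ nil) :
    ω ∈ Set.range fun q : Ωs × Words Ωs => cons q.1 q.2 := by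
  obtain ⟨_ | ⟨j, ω⟩, h⟩ := ω
  · exact absurd rfl hω
  · exact ⟨(⟨j, h j List.mem_cons_self⟩, ⟨ω, fun i hi => h i (List.mem_cons_of_mem j hi)⟩), rfl⟩

theorem tsum_cons {M : Type*} [AddCommMonoid M] [TopologicalSpace M] {f : Words Ωs → M}
    (hf : f nil = 0) : ∑' q : Ωs × Words Ωs, f (cons q.1 q.2) = ∑' ω, f ω :=
  cons_injective.tsum_eq fun _ hω => mem_range_cons fun h => hω (h ▸ hf)

open scoped ENNReal in
theorem tsum_eq_tsum_tsum_cons {f : Words Ωs → ℝ≥0∞} (hf : f nil = 0) :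
    ∑' ω, f ω = ∑' (j : Ωs) (ω : Words Ωs), f (cons j ω) := by
  rw [← ENNReal.tsum_prod, tsum_cons hf]

theorem tsum_eq_nil_add {E : Type*} [NormedAddCommGroup E] [CompleteSpace E] {f : Words Ωs → E}
    (hf : Summable f) : ∑' ω, f ω = f nil + ∑' (j : Ωs) (ω : Words Ωs), f (cons j ω) := by
  classical
  have hcons : Summable fun q : Ωs × Words Ωs => f (cons q.1 q.2) :=
    hf.comp_injective cons_injective
  rw [hf.tsum_eq_add_tsum_ite nil, ← hcons.tsum_prod' hcons.prod_factor,
    ← tsum_cons (f := fun ω => if ω = nil then 0 else f ω) (if_pos rfl)]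
  congr 2 with q
  exact if_neg fun h => List.cons_ne_nil _ _ (congrArg Subtype.val h)

end Words

theorem rwordApply_mem {Ωs : Set ℕ} {T : ℕ → ℝ → ℝ} {s : Set ℝ}
    (hT : ∀ j ∈ Ωs, ∀ x ∈ s, T j x ∈ s) :
    ∀ ω : List ℕ, (∀ j ∈ ω, j ∈ Ωs) → ∀ x ∈ s, rwordApply T ω x ∈ s
  | [], _, _, hx => hx
  | j :: ω, h, x, hx => rwordApply_mem hT ω (fun i hi => h i (List.mem_cons_of_mem j hi)) _
      (hT j (h j List.mem_cons_self) x hx)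

section SlopeProducts

variable {Ωs : Set ℕ} {p : ℕ → ℝ} {k : ℕ → ℕ → ℝ} {ι : ℝ → ℕ} {T : ℕ → ℝ → ℝ} {s : Set ℝ}

open scoped ENNReal

-- In `ℝ≥0∞` all rearrangements are free, so grading words by length needs no summability.
theorem tsum_enorm_rdelta_length_le {r : ℝ≥0∞} (hT : ∀ j ∈ Ωs, ∀ x ∈ s, T j x ∈ s)
    (hr : ∀ x ∈ s, ∑' j : Ωs, ‖p j / k (ι x) j‖ₑ ≤ r) (t : ℕ) :
    ∀ x ∈ s, ∑' ω : Words Ωs,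
      (if ω.1.length = t then ‖rdelta p k ι T ω.1 x‖ₑ else 0) ≤ r ^ t := by
  induction t with
  | zero =>
    intro x _
    rw [tsum_eq_single Words.nil fun ω hω =>
      if_neg fun h => hω (Subtype.ext (List.length_eq_zero_iff.1 h))]
    simp [Words.nil, rdelta]
  | succ t ih =>
    intro x hx
    rw [Words.tsum_eq_tsum_tsum_cons (by simp [Words.nil])]
    calc ∑' (j : Ωs) (ω : Words Ωs), (if (Words.cons j ω).1.length = t + 1
            then ‖rdelta p k ι T (Words.cons j ω).1 x‖ₑ else 0)
        = ∑' j : Ωs, ‖p j / k (ι x) j‖ₑ * ∑' ω : Words Ωs,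
            (if ω.1.length = t then ‖rdelta p k ι T ω.1 (T j x)‖ₑ else 0) := by
          refine tsum_congr fun j => ?_
          rw [← ENNReal.tsum_mul_left]
          refine tsum_congr fun ω => ?_
          simp [Words.cons, rdelta, enorm_mul]
      _ ≤ ∑' j : Ωs, ‖p j / k (ι x) j‖ₑ * r ^ t := by
          gcongr with j
          exact ih _ (hT j j.2 x hx)
      _ = (∑' j : Ωs, ‖p j / k (ι x) j‖ₑ) * r ^ t := ENNReal.tsum_mul_right
      _ ≤ r ^ (t + 1) := by
          rw [pow_succ']
          gcongr
          exact hr x hx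

theorem tsum_enorm_rdelta_le {r : ℝ≥0∞} (hT : ∀ j ∈ Ωs, ∀ x ∈ s, T j x ∈ s)
    (hr : ∀ x ∈ s, ∑' j : Ωs, ‖p j / k (ι x) j‖ₑ ≤ r) {x : ℝ} (hx : x ∈ s) :
    ∑' ω : Words Ωs, ‖rdelta p k ι T ω.1 x‖ₑ ≤ (1 - r)⁻¹ :=
  calc ∑' ω : Words Ωs, ‖rdelta p k ι T ω.1 x‖ₑ
      = ∑' (t : ℕ) (ω : Words Ωs), (if ω.1.length = t then ‖rdelta p k ι T ω.1 x‖ₑ else 0) := by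
        rw [ENNReal.tsum_comm]
        exact tsum_congr fun ω => by rw [tsum_ite_eq']
    _ ≤ ∑' t : ℕ, r ^ t := ENNReal.tsum_le_tsum fun t => tsum_enorm_rdelta_length_le hT hr t x hx
    _ = (1 - r)⁻¹ := ENNReal.tsum_geometric r

end SlopeProducts

section TransferOperator

open Filter Topology

variable {Ωs : Set ℕ} {p : ℕ → ℝ} {k : ℕ → ℕ → ℝ} {ι : ℝ → ℕ} {T : ℕ → ℝ → ℝ} {s : Set ℝ}
  {ρ : ℝ} {x : ℝ}

theorem summable_weight_mul (hT : ∀ j ∈ Ωs, ∀ x ∈ s, T j x ∈ s)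
    (hw : ∀ x ∈ s, Summable fun j : Ωs => |p j / k (ι x) j|) {f : ℝ → ℝ} {B : ℝ}
    (hf : ∀ y ∈ s, |f y| ≤ B) (hx : x ∈ s) :
    Summable fun j : Ωs => p j / k (ι x) j * f (T j x) :=
  .of_norm_bounded ((hw x hx).mul_right B) fun j => by
    rw [Real.norm_eq_abs, abs_mul]
    exact mul_le_mul_of_nonneg_left (hf _ (hT j j.2 x hx)) (abs_nonneg _)

theorem abs_tsum_weight_mul_le (hT : ∀ j ∈ Ωs, ∀ x ∈ s, T j x ∈ s)
    (hw : ∀ x ∈ s, Summable fun j : Ωs => |p j / k (ι x) j|)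
    (hwρ : ∀ x ∈ s, ∑' j : Ωs, |p j / k (ι x) j| ≤ ρ) {f : ℝ → ℝ} {B : ℝ}
    (hf : ∀ y ∈ s, |f y| ≤ B) (hx : x ∈ s) :
    |∑' j : Ωs, p j / k (ι x) j * f (T j x)| ≤ ρ * B := by
  have hB : 0 ≤ B := (abs_nonneg _).trans (hf x hx)
  calc |∑' j : Ωs, p j / k (ι x) j * f (T j x)|
      ≤ (∑' j : Ωs, |p j / k (ι x) j|) * B := by
        rw [← tsum_mul_right]
        exact tsum_of_norm_bounded ((hw x hx).mul_right B).hasSum fun j => by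
          rw [Real.norm_eq_abs, abs_mul]
          exact mul_le_mul_of_nonneg_left (hf _ (hT j j.2 x hx)) (abs_nonneg _)
    _ ≤ ρ * B := mul_le_mul_of_nonneg_right (hwρ x hx) hB

variable (Ωs p k ι T s ρ) in
/-- The transfer operator `h ↦ Σ_j p_j / k_{ι x, j} · h ∘ T_j` is a `ρ`-contraction for the sup
norm on `s`. -/
structure IsUniformContraction : Prop where
  mapsTo : ∀ j ∈ Ωs, ∀ x ∈ s, T j x ∈ s
  summable : ∀ x ∈ s, Summable fun j : Ωs => |p j / k (ι x) j|
  tsum_le : ∀ x ∈ s, ∑' j : Ωs, |p j / k (ι x) j| ≤ ρ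
  lt_one : ρ < 1

namespace IsUniformContraction

theorem nonneg (hc : IsUniformContraction Ωs p k ι T s ρ) (hx : x ∈ s) : 0 ≤ ρ :=
  (tsum_nonneg fun _ => abs_nonneg _).trans (hc.tsum_le x hx)

theorem tsum_enorm_rdelta_le_ofReal (hc : IsUniformContraction Ωs p k ι T s ρ) (hx : x ∈ s) :
    ∑' ω : Words Ωs, ‖rdelta p k ι T ω.1 x‖ₑ ≤ ENNReal.ofReal (1 - ρ)⁻¹ := by
  rw [ENNReal.ofReal_inv_of_pos (by linarith [hc.lt_one]), ENNReal.ofReal_sub _ (hc.nonneg hx),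
    ENNReal.ofReal_one]
  refine tsum_enorm_rdelta_le hc.mapsTo (fun y hy => ?_) hx
  simp_rw [Real.enorm_eq_ofReal_abs]
  rw [← ENNReal.ofReal_tsum_of_nonneg (fun _ => abs_nonneg _) (hc.summable y hy)]
  exact ENNReal.ofReal_le_ofReal (hc.tsum_le y hy)

theorem summable_abs_rdelta (hc : IsUniformContraction Ωs p k ι T s ρ) (hx : x ∈ s) :
    Summable fun ω : Words Ωs => |rdelta p k ι T ω.1 x| :=
  tsum_enorm_ne_top_iff_summable_norm.1
    (ne_top_of_le_ne_top ENNReal.ofReal_ne_top (hc.tsum_enorm_rdelta_le_ofReal hx))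

theorem tsum_abs_rdelta_le (hc : IsUniformContraction Ωs p k ι T s ρ) (hx : x ∈ s) :
    ∑' ω : Words Ωs, |rdelta p k ι T ω.1 x| ≤ (1 - ρ)⁻¹ := by
  rw [← ENNReal.ofReal_le_ofReal_iff (inv_nonneg.2 (by linarith [hc.lt_one])),
    ENNReal.ofReal_tsum_of_nonneg (fun _ => abs_nonneg _) (hc.summable_abs_rdelta hx)]
  simpa only [Real.enorm_eq_ofReal_abs] using hc.tsum_enorm_rdelta_le_ofReal hx

theorem eqOn_zero_of_eq_tsum (hc : IsUniformContraction Ωs p k ι T s ρ) {f : ℝ → ℝ} {B : ℝ}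
    (hf : ∀ y ∈ s, |f y| ≤ B) (hfix : ∀ y ∈ s, f y = ∑' j : Ωs, p j / k (ι y) j * f (T j y)) :
    ∀ y ∈ s, f y = 0 := by
  have hpow : ∀ t : ℕ, ∀ y ∈ s, |f y| ≤ ρ ^ t * B := by
    intro t
    induction t with
    | zero => simpa using hf
    | succ t ih =>
      intro y hy
      rw [hfix y hy, pow_succ', mul_assoc]
      exact abs_tsum_weight_mul_le hc.mapsTo hc.summable hc.tsum_le ih hy
  intro y hy
  have hlim : Tendsto (fun t : ℕ => ρ ^ t * B) atTop (𝓝 0) := by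
    simpa using (tendsto_pow_atTop_nhds_zero_of_lt_one (hc.nonneg hy) hc.lt_one).mul_const B
  exact abs_nonpos_iff.1 (ge_of_tendsto' hlim fun t => hpow t y hy)

end IsUniformContraction

variable (Ωs p k ι T) in
/-- `Σ_{t ≥ 0} Σ_{ω ∈ Ωᵗ} δ_ω(x, t) g(T_ω x)`, i.e. `Σ_t Lᵗ g` for the transfer operator `L`. -/
def neumannSum (g : ℝ → ℝ) (x : ℝ) : ℝ :=
  ∑' ω : Words Ωs, rdelta p k ι T ω.1 x * g (rwordApply T ω.1 x)

theorem KB_eq_neumannSum (i : ℕ) :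
    KB Ωs p k ι T i = neumannSum Ωs p k ι T fun y => if i < ι y then 1 else 0 :=
  funext fun _ => tsum_congr fun _ => by simp

namespace IsUniformContraction

theorem summable_rdelta_mul (hc : IsUniformContraction Ωs p k ι T s ρ) {g : ℝ → ℝ} {B : ℝ}
    (hg : ∀ y ∈ s, |g y| ≤ B) (hx : x ∈ s) :
    Summable fun ω : Words Ωs => rdelta p k ι T ω.1 x * g (rwordApply T ω.1 x) :=
  .of_norm_bounded ((hc.summable_abs_rdelta hx).mul_right B) fun ω => by
    rw [Real.norm_eq_abs, abs_mul]
    exact mul_le_mul_of_nonneg_left (hg _ (rwordApply_mem hc.mapsTo ω.1 ω.2 x hx)) (abs_nonneg _)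

theorem abs_neumannSum_le (hc : IsUniformContraction Ωs p k ι T s ρ) {g : ℝ → ℝ} {B : ℝ}
    (hg : ∀ y ∈ s, |g y| ≤ B) (hx : x ∈ s) :
    |neumannSum Ωs p k ι T g x| ≤ (1 - ρ)⁻¹ * B := by
  have hB : 0 ≤ B := (abs_nonneg _).trans (hg x hx)
  calc |neumannSum Ωs p k ι T g x|
      ≤ (∑' ω : Words Ωs, |rdelta p k ι T ω.1 x|) * B := by
        rw [← tsum_mul_right]
        exact tsum_of_norm_bounded ((hc.summable_abs_rdelta hx).mul_right B).hasSum fun ω => by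
          rw [Real.norm_eq_abs, abs_mul]
          exact mul_le_mul_of_nonneg_left (hg _ (rwordApply_mem hc.mapsTo ω.1 ω.2 x hx))
            (abs_nonneg _)
    _ ≤ (1 - ρ)⁻¹ * B := mul_le_mul_of_nonneg_right (hc.tsum_abs_rdelta_le hx) hB

theorem neumannSum_eq_add_tsum (hc : IsUniformContraction Ωs p k ι T s ρ) {g : ℝ → ℝ} {B : ℝ}
    (hg : ∀ y ∈ s, |g y| ≤ B) (hx : x ∈ s) :
    neumannSum Ωs p k ι T g x
      = g x + ∑' j : Ωs, p j / k (ι x) j * neumannSum Ωs p k ι T g (T j x) := by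
  rw [neumannSum, Words.tsum_eq_nil_add (hc.summable_rdelta_mul hg hx)]
  congr 1
  · simp [Words.nil, rdelta, rwordApply]
  · refine tsum_congr fun j => ?_
    rw [neumannSum, ← tsum_mul_left]
    exact tsum_congr fun ω => by simp [Words.cons, rdelta, rwordApply, mul_assoc]

theorem abs_KB_le (hc : IsUniformContraction Ωs p k ι T s ρ) (i : ℕ) (hx : x ∈ s) :
    |KB Ωs p k ι T i x| ≤ (1 - ρ)⁻¹ := by
  rw [KB_eq_neumannSum, ← mul_one (1 - ρ)⁻¹]
  exact hc.abs_neumannSum_le (fun _ _ => by split_ifs <;> norm_num) hx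

theorem KB_eq_add_tsum (hc : IsUniformContraction Ωs p k ι T s ρ) (i : ℕ) (hx : x ∈ s) :
    KB Ωs p k ι T i x
      = (if i < ι x then 1 else 0) + ∑' j : Ωs, p j / k (ι x) j * KB Ωs p k ι T i (T j x) := by
  rw [KB_eq_neumannSum]
  exact hc.neumannSum_eq_add_tsum (B := 1) (fun _ _ => by split_ifs <;> norm_num) hx

end IsUniformContraction

end TransferOperator

section BranchIdentity

theorem inv_abs_sub_eta_add_phi_eq (P Z : ℝ) {K D : ℕ → ℝ} {i : ℕ} (hi : K i ≠ 0)
    (hi' : K (i + 1) ≠ 0) :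
    P / |K i| - (P * ((if 0 < K i then 1 else 0) - (K i * Z + D i)) / K i
        + P * (-(if K (i + 1) < 0 then 1 else 0) + (K (i + 1) * Z + D (i + 1))) / K (i + 1))
      = ((if K i < 0 then P / |K i| else 0) + P * D i / K i)
        - ((if K (i + 1) < 0 then P / |K (i + 1)| else 0) + P * D (i + 1) / K (i + 1)) := by
  rcases hi.lt_or_gt with h | h <;> rcases hi'.lt_or_gt with h' | h' <;>
    simp only [h, h', asymm h, asymm h', abs_of_neg, abs_of_pos, if_true, if_false] <;>
    field_simp <;> ring

theorem branch_sum_eq_zero (P : ℝ) (K D Z : ℕ → ℝ) {n : ℕ} (hn : 1 ≤ n)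
    (hK : ∀ i ∈ Finset.Icc 1 n, K i ≠ 0) (hD1 : D 1 = if 0 < K 1 then 0 else 1) :
    (∑ i ∈ Finset.Ico 1 n, P / |K i|) + (if K n < 0 then P / |K n| else 0)
      - ∑ i ∈ Finset.Ico 1 n, (P * ((if 0 < K i then 1 else 0) - (K i * Z i + D i)) / K i
          + P * (-(if K (i + 1) < 0 then 1 else 0) + (K (i + 1) * Z i + D (i + 1))) / K (i + 1))
      + P * D n / K n = 0 := by
  -- the terms telescope along `u`, and (A4) on `I_1` says exactly `u 1 = 0`
  set u : ℕ → ℝ := fun i => (if K i < 0 then P / |K i| else 0) + P * D i / K i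
  have htel : ∑ i ∈ Finset.Ico 1 n, P / |K i|
      - ∑ i ∈ Finset.Ico 1 n, (P * ((if 0 < K i then 1 else 0) - (K i * Z i + D i)) / K i
          + P * (-(if K (i + 1) < 0 then 1 else 0) + (K (i + 1) * Z i + D (i + 1))) / K (i + 1))
      = u 1 - u n := by
    rw [← Finset.sum_sub_distrib, ← neg_sub, ← Finset.sum_Ico_sub u hn, ← Finset.sum_neg_distrib]
    refine Finset.sum_congr rfl fun i hi => ?_
    obtain ⟨hi1, hin⟩ := Finset.mem_Ico.1 hi
    rw [inv_abs_sub_eta_add_phi_eq P (Z i) (hK i (Finset.mem_Icc.2 ⟨hi1, hin.le⟩))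
      (hK (i + 1) (Finset.mem_Icc.2 ⟨by omega, hin⟩)), neg_sub]
  have hu1 : u 1 = 0 := by
    rcases (hK 1 (Finset.mem_Icc.2 ⟨le_rfl, hn⟩)).lt_or_gt with h | h
    · simp [u, hD1, h, asymm h, abs_of_neg h, div_neg]
    · simp [u, hD1, h, asymm h]
  linarith

end BranchIdentity

section RandomPiecewiseLinear

variable {Ωs : Set ℕ} {N : ℕ} {p : ℕ → ℝ} {ρ : ℝ} {k d : ℕ → ℕ → ℝ} {ι : ℝ → ℕ}
  {z : ℕ → ℝ} {x : ℝ}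

theorem abs_weight_eq (hp : ∀ j ∈ Ωs, 0 < p j) (n : ℕ) :
    (fun j : Ωs => |p j / k n j|) = fun j : Ωs => p j / |k n j| :=
  funext fun j => by rw [abs_div, abs_of_pos (hp j j.2)]

theorem abs_indicator_sub_le_one (c : Prop) [Decidable c] {a : ℝ} (ha : a ∈ Icc (0:ℝ) 1) :
    |(if c then 1 else 0) - a| ≤ 1 :=
  abs_sub_le_of_nonneg_of_le (by split_ifs <;> norm_num) (by split_ifs <;> norm_num) ha.1 ha.2

theorem summable_mul_div_of_abs_le_one {α : Type*} {q e K : α → ℝ} (hq : ∀ j, 0 ≤ q j)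
    (hs : Summable fun j => q j / |K j|) (he : ∀ j, |e j| ≤ 1) :
    Summable fun j => q j * e j / K j :=
  .of_norm_bounded hs fun j => by
    rw [Real.norm_eq_abs, abs_div, abs_mul, abs_of_nonneg (hq j)]
    exact div_le_div_of_nonneg_right (mul_le_of_le_one_right (hq j) (he j)) (abs_nonneg _)

theorem sum_Ico_add_ite_le_sum_Icc {f : ℕ → ℝ} (hf : ∀ i, 0 ≤ f i) {n : ℕ}
    (hn : n ∈ Finset.Icc 1 N) (c : Prop) [Decidable c] :
    (∑ i ∈ Finset.Ico 1 n, f i) + (if c then f n else 0) ≤ ∑ i ∈ Finset.Icc 1 N, f i := by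
  obtain ⟨hn1, hnN⟩ := Finset.mem_Icc.1 hn
  calc (∑ i ∈ Finset.Ico 1 n, f i) + (if c then f n else 0)
      ≤ (∑ i ∈ Finset.Ico 1 n, f i) + f n := by
        gcongr
        split_ifs
        exacts [le_rfl, hf n]
    _ = ∑ i ∈ Finset.Icc 1 n, f i := by
        rw [← Finset.Ico_insert_right hn1, Finset.sum_insert (by simp), add_comm]
    _ ≤ ∑ i ∈ Finset.Icc 1 N, f i :=
        Finset.sum_le_sum_of_subset_of_nonneg (Finset.Icc_subset_Icc_right hnN) fun i _ _ => hf i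

theorem CC_summand_nonneg (hp : ∀ j ∈ Ωs, 0 < p j) (n : ℕ) (j : Ωs) :
    0 ≤ (∑ i ∈ Finset.Ico 1 n, p j / |k i j|) + (if k n j < 0 then p j / |k n j| else 0) :=
  add_nonneg (Finset.sum_nonneg fun _ _ => div_nonneg (hp j j.2).le (abs_nonneg _))
    (by split_ifs; exacts [div_nonneg (hp j j.2).le (abs_nonneg _), le_rfl])

theorem summable_CC_summand (hp : ∀ j ∈ Ωs, 0 < p j)
    (hA2 : ∀ n ∈ Finset.Icc 1 N, Summable fun j : Ωs => p j / |k n j|) {n : ℕ}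
    (hn : n ∈ Finset.Icc 1 N) :
    Summable fun j : Ωs =>
      (∑ i ∈ Finset.Ico 1 n, p j / |k i j|) + (if k n j < 0 then p j / |k n j| else 0) :=
  .of_nonneg_of_le (CC_summand_nonneg hp n)
    (fun j => sum_Ico_add_ite_le_sum_Icc (fun _ => div_nonneg (hp j j.2).le (abs_nonneg _)) hn _)
    (summable_sum hA2)

theorem abs_CC_le (hp : ∀ j ∈ Ωs, 0 < p j)
    (hA2 : ∀ n ∈ Finset.Icc 1 N, Summable fun j : Ωs => p j / |k n j|) (hx : ι x ∈ Finset.Icc 1 N) :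
    |CC Ωs p k ι x| ≤ ∑' j : Ωs, ∑ i ∈ Finset.Icc 1 N, p j / |k i j| := by
  rw [CC, abs_of_nonneg (tsum_nonneg (CC_summand_nonneg hp (ι x)))]
  exact (summable_CC_summand hp hA2 hx).tsum_le_tsum
    (fun j => sum_Ico_add_ite_le_sum_Icc (fun _ => div_nonneg (hp j j.2).le (abs_nonneg _)) hx _)
    (summable_sum hA2)

theorem hasSum_mul_intercept_div (hpsum : HasSum (fun j : Ωs => p j) 1)
    (hk : ∀ j ∈ Ωs, k (ι x) j ≠ 0)
    (hT : Summable fun j : Ωs => p j / k (ι x) j * Tpl k d ι j x) :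
    HasSum (fun j : Ωs => p j * d (ι x) j / k (ι x) j)
      ((∑' j : Ωs, p j / k (ι x) j * Tpl k d ι j x) - x) := by
  have h := hT.hasSum.sub (hpsum.mul_right x)
  rw [one_mul] at h
  refine h.congr_fun fun j => ?_
  simp only [Tpl]
  field_simp [hk j j.2]
  ring

theorem sum_Icc_mul_ite_lt_eq_sum_Ico (f : ℕ → ℝ) {n : ℕ} (hn : n ∈ Finset.Icc 1 N) :
    ∑ i ∈ Finset.Icc 1 (N - 1), f i * (if i < n then 1 else 0) = ∑ i ∈ Finset.Ico 1 n, f i := by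
  simp only [mul_ite, mul_one, mul_zero]
  rw [← Finset.sum_filter]
  congr 1
  ext i
  simp only [Finset.mem_filter, Finset.mem_Icc, Finset.mem_Ico] at hn ⊢
  omega

theorem summable_eta_summand (hp : ∀ j ∈ Ωs, 0 < p j)
    (hA2 : ∀ n ∈ Finset.Icc 1 N, Summable fun j : Ωs => p j / |k n j|)
    (hab : ∀ i ∈ Finset.Icc 1 (N - 1), ∀ j ∈ Ωs,
      aPt k d z i j ∈ Icc (0:ℝ) 1 ∧ bPt k d z i j ∈ Icc (0:ℝ) 1)
    {i : ℕ} (hi : i ∈ Finset.Icc 1 (N - 1)) :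
    Summable fun j : Ωs => p j * ((if 0 < k i j then (1:ℝ) else 0) - aPt k d z i j) / k i j :=
  summable_mul_div_of_abs_le_one (fun j => (hp j j.2).le)
    (hA2 i (by simp only [Finset.mem_Icc] at hi ⊢; omega))
    fun j => abs_indicator_sub_le_one _ (hab i hi j j.2).1

theorem summable_phi_summand (hp : ∀ j ∈ Ωs, 0 < p j)
    (hA2 : ∀ n ∈ Finset.Icc 1 N, Summable fun j : Ωs => p j / |k n j|)
    (hab : ∀ i ∈ Finset.Icc 1 (N - 1), ∀ j ∈ Ωs,
      aPt k d z i j ∈ Icc (0:ℝ) 1 ∧ bPt k d z i j ∈ Icc (0:ℝ) 1)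
    {i : ℕ} (hi : i ∈ Finset.Icc 1 (N - 1)) :
    Summable fun j : Ωs =>
      p j * (-(if k (i + 1) j < 0 then (1:ℝ) else 0) + bPt k d z i j) / k (i + 1) j :=
  summable_mul_div_of_abs_le_one (fun j => (hp j j.2).le)
    (hA2 (i + 1) (by simp only [Finset.mem_Icc] at hi ⊢; omega)) fun j => by
      rw [neg_add_eq_sub, abs_sub_comm]
      exact abs_indicator_sub_le_one _ (hab i hi j j.2).2

theorem CC_sub_sum_add_tsum_eq_zero (hp : ∀ j ∈ Ωs, 0 < p j) (hx : ι x ∈ Finset.Icc 1 N)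
    (hk : ∀ n ∈ Finset.Icc 1 N, ∀ j ∈ Ωs, k n j ≠ 0)
    (hA2 : ∀ n ∈ Finset.Icc 1 N, Summable fun j : Ωs => p j / |k n j|)
    (hab : ∀ i ∈ Finset.Icc 1 (N - 1), ∀ j ∈ Ωs,
      aPt k d z i j ∈ Icc (0:ℝ) 1 ∧ bPt k d z i j ∈ Icc (0:ℝ) 1)
    (hd1 : ∀ j ∈ Ωs, d 1 j = if 0 < k 1 j then 0 else 1)
    (hd : Summable fun j : Ωs => p j * d (ι x) j / k (ι x) j) :
    CC Ωs p k ι x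
      - ∑ i ∈ Finset.Icc 1 (N - 1),
          (etaC Ωs p k d z i + phiC Ωs p k d z i) * (if i < ι x then 1 else 0)
      + ∑' j : Ωs, p j * d (ι x) j / k (ι x) j = 0 := by
  obtain ⟨hn1, hnN⟩ := Finset.mem_Icc.1 hx
  have hmem : ∀ i ∈ Finset.Ico 1 (ι x), i ∈ Finset.Icc 1 (N - 1) := fun i hi => by
    simp only [Finset.mem_Ico, Finset.mem_Icc] at hi ⊢
    omega
  have hηφ : ∀ i ∈ Finset.Ico 1 (ι x), Summable fun j : Ωs =>
      p j * ((if 0 < k i j then (1:ℝ) else 0) - aPt k d z i j) / k i j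
        + p j * (-(if k (i + 1) j < 0 then (1:ℝ) else 0) + bPt k d z i j) / k (i + 1) j :=
    fun i hi => (summable_eta_summand hp hA2 hab (hmem i hi)).add
      (summable_phi_summand hp hA2 hab (hmem i hi))
  have hswap : ∑ i ∈ Finset.Ico 1 (ι x), (etaC Ωs p k d z i + phiC Ωs p k d z i)
      = ∑' j : Ωs, ∑ i ∈ Finset.Ico 1 (ι x),
          (p j * ((if 0 < k i j then (1:ℝ) else 0) - aPt k d z i j) / k i j
            + p j * (-(if k (i + 1) j < 0 then (1:ℝ) else 0) + bPt k d z i j) / k (i + 1) j) := by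
    rw [Summable.tsum_finsetSum hηφ]
    exact Finset.sum_congr rfl fun i hi => ((summable_eta_summand hp hA2 hab (hmem i hi)).tsum_add
      (summable_phi_summand hp hA2 hab (hmem i hi))).symm
  have hCC := summable_CC_summand hp hA2 hx
  rw [sum_Icc_mul_ite_lt_eq_sum_Ico _ hx, hswap, CC, ← hCC.tsum_sub (summable_sum hηφ),
    ← (hCC.sub (summable_sum hηφ)).tsum_add hd]
  refine (tsum_congr fun j => ?_).trans tsum_zero
  exact branch_sum_eq_zero (p j) (fun i => k i j) (fun i => d i j) z hn1
    (fun i hi => hk i (Finset.Icc_subset_Icc_right hnN hi) j j.2) (hd1 j j.2)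

variable (Ωs N p k d ι z) in
def defect (x : ℝ) : ℝ :=
  neumannSum Ωs p k ι (Tpl k d ι) (CC Ωs p k ι) x
    - ∑ i ∈ Finset.Icc 1 (N - 1),
        (etaC Ωs p k d z i + phiC Ωs p k d z i) * KB Ωs p k ι (Tpl k d ι) i x
    - x

theorem abs_le_one_of_mem_Icc {y : ℝ} (hy : y ∈ Icc (0:ℝ) 1) : |y| ≤ 1 :=
  abs_le.2 ⟨by linarith [hy.1], hy.2⟩

theorem exists_abs_defect_le (hp : ∀ j ∈ Ωs, 0 < p j)
    (hι : ∀ x ∈ Icc (0:ℝ) 1, ι x ∈ Finset.Icc 1 N)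
    (hc : IsUniformContraction Ωs p k ι (Tpl k d ι) (Icc 0 1) ρ)
    (hA2 : ∀ n ∈ Finset.Icc 1 N, Summable fun j : Ωs => p j / |k n j|) :
    ∃ B, ∀ y ∈ Icc (0:ℝ) 1, |defect Ωs N p k d ι z y| ≤ B := by
  refine ⟨(1 - ρ)⁻¹ * ∑' j : Ωs, ∑ i ∈ Finset.Icc 1 N, p j / |k i j|
    + ∑ i ∈ Finset.Icc 1 (N - 1), |etaC Ωs p k d z i + phiC Ωs p k d z i| * (1 - ρ)⁻¹ + 1,
    fun y hy => ?_⟩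
  calc |defect Ωs N p k d ι z y|
      ≤ |neumannSum Ωs p k ι (Tpl k d ι) (CC Ωs p k ι) y|
        + ∑ i ∈ Finset.Icc 1 (N - 1),
            |etaC Ωs p k d z i + phiC Ωs p k d z i| * |KB Ωs p k ι (Tpl k d ι) i y| + |y| := by
        refine (abs_sub _ _).trans (add_le_add_left ((abs_sub _ _).trans (add_le_add_right ?_ _)) _)
        exact (Finset.abs_sum_le_sum_abs _ _).trans_eq (by simp only [abs_mul])
    _ ≤ _ := by
        gcongr with i
        · exact hc.abs_neumannSum_le (fun y hy => abs_CC_le hp hA2 (hι y hy)) hy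
        · exact hc.abs_KB_le i hy
        · exact abs_le_one_of_mem_Icc hy

theorem defect_eq_tsum (hp : ∀ j ∈ Ωs, 0 < p j) (hpsum : HasSum (fun j : Ωs => p j) 1)
    (hι : ∀ x ∈ Icc (0:ℝ) 1, ι x ∈ Finset.Icc 1 N)
    (hk : ∀ n ∈ Finset.Icc 1 N, ∀ j ∈ Ωs, k n j ≠ 0)
    (hc : IsUniformContraction Ωs p k ι (Tpl k d ι) (Icc 0 1) ρ)
    (hA2 : ∀ n ∈ Finset.Icc 1 N, Summable fun j : Ωs => p j / |k n j|)
    (hab : ∀ i ∈ Finset.Icc 1 (N - 1), ∀ j ∈ Ωs,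
      aPt k d z i j ∈ Icc (0:ℝ) 1 ∧ bPt k d z i j ∈ Icc (0:ℝ) 1)
    (hd1 : ∀ j ∈ Ωs, d 1 j = if 0 < k 1 j then 0 else 1) (hx : x ∈ Icc (0:ℝ) 1) :
    defect Ωs N p k d ι z x
      = ∑' j : Ωs, p j / k (ι x) j * defect Ωs N p k d ι z (Tpl k d ι j x) := by
  have hC : ∀ y ∈ Icc (0:ℝ) 1, |CC Ωs p k ι y| ≤ ∑' j : Ωs, ∑ i ∈ Finset.Icc 1 N, p j / |k i j| :=
    fun y hy => abs_CC_le hp hA2 (hι y hy)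
  have hsG := summable_weight_mul hc.mapsTo hc.summable (fun _ => hc.abs_neumannSum_le hC) hx
  have hsK := fun i => summable_weight_mul hc.mapsTo hc.summable (fun _ => hc.abs_KB_le i) hx
  have hsT := summable_weight_mul (f := fun y => y) hc.mapsTo hc.summable
    (fun _ => abs_le_one_of_mem_Icc) hx
  have haff := hasSum_mul_intercept_div hpsum (hk _ (hι x hx)) hsT
  have hsS : Summable fun j : Ωs => ∑ i ∈ Finset.Icc 1 (N - 1),
      (etaC Ωs p k d z i + phiC Ωs p k d z i)
        * (p j / k (ι x) j * KB Ωs p k ι (Tpl k d ι) i (Tpl k d ι j x)) :=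
    summable_sum fun i _ => (hsK i).mul_left _
  have hlin : ∑' j : Ωs, p j / k (ι x) j * defect Ωs N p k d ι z (Tpl k d ι j x)
      = ∑' j : Ωs, p j / k (ι x) j * neumannSum Ωs p k ι (Tpl k d ι) (CC Ωs p k ι) (Tpl k d ι j x)
        - ∑ i ∈ Finset.Icc 1 (N - 1), (etaC Ωs p k d z i + phiC Ωs p k d z i)
            * ∑' j : Ωs, p j / k (ι x) j * KB Ωs p k ι (Tpl k d ι) i (Tpl k d ι j x)
        - ∑' j : Ωs, p j / k (ι x) j * Tpl k d ι j x := by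
    simp_rw [← tsum_mul_left]
    rw [← Summable.tsum_finsetSum fun i _ => (hsK i).mul_left _, ← hsG.tsum_sub hsS,
      ← (hsG.sub hsS).tsum_sub hsT]
    refine tsum_congr fun j => ?_
    simp only [defect, mul_sub, Finset.mul_sum]
    congr 2
    exact Finset.sum_congr rfl fun i _ => by ring
  rw [hlin, defect, hc.neumannSum_eq_add_tsum hC hx]
  simp only [hc.KB_eq_add_tsum _ hx, mul_add, Finset.sum_add_distrib]
  linarith [haff.tsum_eq, CC_sub_sum_add_tsum_eq_zero hp (hι x hx) hk hA2 hab hd1 haff.summable]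

end RandomPiecewiseLinear

theorem stmt_10_general (Ωs : Set ℕ) (N : ℕ) (p : ℕ → ℝ) (ρ : ℝ)
    (hρ1 : ρ < 1)
    (hp : ∀ j ∈ Ωs, 0 < p j) (hpsum : HasSum (fun j : Ωs => p j.1) 1)
    (k d : ℕ → ℕ → ℝ) (ι : ℝ → ℕ) (z : ℕ → ℝ)
    (hι : ∀ x ∈ Icc (0:ℝ) 1, ι x ∈ Finset.Icc 1 N)
    (hk : ∀ n ∈ Finset.Icc 1 N, ∀ j ∈ Ωs, k n j ≠ 0)
    (hT : ∀ j ∈ Ωs, ∀ x ∈ Icc (0:ℝ) 1, Tpl k d ι j x ∈ Icc (0:ℝ) 1)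
    (hA2 : ∀ n ∈ Finset.Icc 1 N,
      Summable (fun j : Ωs => p j.1 / |k n j.1|) ∧
        ∑' j : Ωs, p j.1 / |k n j.1| ≤ ρ)
    (hab : ∀ i ∈ Finset.Icc 1 (N - 1), ∀ j ∈ Ωs,
      aPt k d z i j ∈ Icc (0:ℝ) 1 ∧ bPt k d z i j ∈ Icc (0:ℝ) 1)
    -- (A4): the branches on `I_1` fix `{0,1}` and likewise on `I_N`
    (hA4 : ∀ j ∈ Ωs,
      (d 1 j = if 0 < k 1 j then 0 else 1) ∧
        (d N j = if 0 < k N j then 1 - k N j else -k N j)) :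
    ∀ y ∈ Icc (0:ℝ) 1,
      y = (∑' ω : Words Ωs,
            rdelta p k ι (Tpl k d ι) ω.1 y *
              CC Ωs p k ι (rwordApply (Tpl k d ι) ω.1 y)) -
          ∑ i ∈ Finset.Icc 1 (N - 1),
            (etaC Ωs p k d z i + phiC Ωs p k d z i) * KB Ωs p k ι (Tpl k d ι) i y := by
  have hc : IsUniformContraction Ωs p k ι (Tpl k d ι) (Icc 0 1) ρ :=
    ⟨hT, fun x hx => abs_weight_eq hp _ ▸ (hA2 _ (hι x hx)).1,
      fun x hx => abs_weight_eq hp _ ▸ (hA2 _ (hι x hx)).2, hρ1⟩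
  have hA2s := fun n hn => (hA2 n hn).1
  obtain ⟨B, hB⟩ := exists_abs_defect_le (z := z) hp hι hc hA2s
  intro y hy
  have h0 := hc.eqOn_zero_of_eq_tsum hB
    (fun x hx => defect_eq_tsum hp hpsum hι hk hc hA2s hab (fun j hj => (hA4 j hj).1) hx) y hy
  exact (sub_eq_zero.1 h0).symm

/-- for every `y ∈ [0,1]`,
`y = Σ_{t≥0} Σ_{ω∈Ωᵗ} δ_ω(y,t)·C(T_ω(y)) − Σ_{i=1}^{N−1} (η_i + φ_i)·KB_i(y)`. -/
theorem stmt_10 (Ωs : Set ℕ) (N : ℕ) (hN : 2 ≤ N) (p : ℕ → ℝ) (ρ : ℝ)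
    (hρ0 : 0 < ρ) (hρ1 : ρ < 1)
    (hp : ∀ j ∈ Ωs, 0 < p j) (hpsum : HasSum (fun j : Ωs => p j.1) 1)
    (k d : ℕ → ℕ → ℝ) (ι : ℝ → ℕ) (z : ℕ → ℝ)
    (hι : ∀ x ∈ Icc (0:ℝ) 1, ι x ∈ Finset.Icc 1 N)
    (hk : ∀ n ∈ Finset.Icc 1 N, ∀ j ∈ Ωs, k n j ≠ 0)
    (hT : ∀ j ∈ Ωs, ∀ x ∈ Icc (0:ℝ) 1, Tpl k d ι j x ∈ Icc (0:ℝ) 1)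
    (hA2 : ∀ n ∈ Finset.Icc 1 N,
      Summable (fun j : Ωs => p j.1 / |k n j.1|) ∧
        ∑' j : Ωs, p j.1 / |k n j.1| ≤ ρ)
    (hS : ∀ n ∈ Finset.Icc 1 N, Sav Ωs p k n ≠ 0)
    (hz : ∀ i ∈ Finset.Icc 1 (N - 1), z i ∈ Icc (0:ℝ) 1)
    (hab : ∀ i ∈ Finset.Icc 1 (N - 1), ∀ j ∈ Ωs,
      aPt k d z i j ∈ Icc (0:ℝ) 1 ∧ bPt k d z i j ∈ Icc (0:ℝ) 1)
    -- (A4): the branches on `I_1` fix `{0,1}` and likewise on `I_N`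
    (hA4 : ∀ j ∈ Ωs,
      (d 1 j = if 0 < k 1 j then 0 else 1) ∧
        (d N j = if 0 < k N j then 1 - k N j else -k N j)) :
    ∀ y ∈ Icc (0:ℝ) 1,
      y = (∑' ω : Words Ωs,
            rdelta p k ι (Tpl k d ι) ω.1 y *
              CC Ωs p k ι (rwordApply (Tpl k d ι) ω.1 y)) -
          ∑ i ∈ Finset.Icc 1 (N - 1),
            (etaC Ωs p k d z i + phiC Ωs p k d z i) * KB Ωs p k ι (Tpl k d ι) i y :=
  stmt_10_general Ωs N p ρ hρ1 hp hpsum k d ι z hι hk hT hA2 hab hA4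

end
end
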